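/- Let A be a unipotent invertible linear operator on a finite-dimensional real vector space V, with N = A − Id nilpotent of index k+1 (N^{k+1} = 0, N^k ≠ 0), and k = 2ℓ even. Then the image of N^{2ℓ} is pointwise A-invariant: A ∘ N^{2ℓ} = N^{2ℓ}. Moreover, N^{2ℓ}/(2ℓ)! = lim_{m→∞} A^m / m^{2ℓ} as linear maps. -/

import Mathlib

open Filter Finset Asymptotics Topology

/-!
Since `A = 1 + N` and `N ^ (2ℓ + 1) = 0`, the binomial theorem truncates to
`A ^ m = ∑_{j ≤ 2ℓ} C(m, j) N ^ j`, a polynomial in `m` whose top coefficient `C(m, 2ℓ)` is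
asymptotic to `m ^ (2ℓ) / (2ℓ)!` while the lower ones are `o(m ^ (2ℓ))`. The invariance is
`(1 + N) N ^ (2ℓ) = N ^ (2ℓ) + N ^ (2ℓ + 1)`.
-/

theorem tendsto_choose_div_pow_self (j : ℕ) :
    Tendsto (fun m : ℕ => (m.choose j : ℝ) / (m : ℝ) ^ j) atTop (𝓝 (j.factorial : ℝ)⁻¹) := by
  have hequiv := (isEquivalent_choose j).div (IsEquivalent.refl (u := fun m : ℕ => (m : ℝ) ^ j))
  refine hequiv.tendsto_nhds_iff.2 (tendsto_const_nhds.congr' ?_)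
  filter_upwards [eventually_ne_atTop 0] with m hm
  simp only [Pi.div_apply]
  field_simp

theorem tendsto_choose_div_pow_of_lt {j k : ℕ} (h : j < k) :
    Tendsto (fun m : ℕ => (m.choose j : ℝ) / (m : ℝ) ^ k) atTop (𝓝 0) := by
  have hinv : Tendsto (fun m : ℕ => ((m : ℝ) ^ (k - j))⁻¹) atTop (𝓝 0) :=
    tendsto_inv_atTop_zero.comp
      ((tendsto_pow_atTop (by omega)).comp tendsto_natCast_atTop_atTop)
  have hprod := (tendsto_choose_div_pow_self j).mul hinv
  rw [mul_zero] at hprod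
  refine hprod.congr fun m => ?_
  rw [← div_eq_mul_inv, div_div, ← pow_add, Nat.add_sub_cancel' h.le]

theorem one_add_pow_eq_sum_range_of_pow_eq_zero {R : Type*} [Semiring R] {N : R} {k : ℕ}
    (hN : N ^ (k + 1) = 0) (m : ℕ) :
    (1 + N) ^ m = ∑ j ∈ range (k + 1), m.choose j • N ^ j := by
  rw [add_comm, (Commute.one_right N).add_pow]
  simp only [one_pow, mul_one, ← nsmul_eq_mul']
  rw [sum_subset (range_subset_range.2 (by omega : m + 1 ≤ m + k + 1)),
    sum_subset (range_subset_range.2 (by omega : k + 1 ≤ m + k + 1))]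
  · intro j _ hj
    rw [pow_eq_zero_of_le (by simpa using hj) hN, smul_zero]
  · intro j _ hj
    rw [Nat.choose_eq_zero_of_lt (by simpa using hj), zero_smul]

theorem tendsto_inv_pow_smul_sum_choose_smul {M : Type*} [AddCommMonoid M] [Module ℝ M]
    [TopologicalSpace M] [ContinuousAdd M] [ContinuousSMul ℝ M] (k : ℕ) (w : ℕ → M) :
    Tendsto (fun m : ℕ => ((m : ℝ) ^ k)⁻¹ • ∑ j ∈ range (k + 1), (m.choose j : ℝ) • w j) atTop
      (𝓝 ((k.factorial : ℝ)⁻¹ • w k)) := by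
  have hlim := (tendsto_finsetSum (range k) fun j hj =>
      (tendsto_choose_div_pow_of_lt (mem_range.1 hj)).smul_const (w j)).add
    ((tendsto_choose_div_pow_self k).smul_const (w k))
  simp only [zero_smul, sum_const_zero, zero_add] at hlim
  refine hlim.congr fun m => ?_
  simp only [sum_range_succ, smul_add, smul_sum, smul_smul, div_eq_inv_mul]

theorem stmt4_general {V : Type*} [NormedAddCommGroup V] [NormedSpace ℝ V]
    (A : V ≃ₗ[ℝ] V) (ℓ : ℕ) (N : V →ₗ[ℝ] V)
    (hN : N = (A : V →ₗ[ℝ] V) - LinearMap.id)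
    (hnil : N ^ (2 * ℓ + 1) = 0) :
    (A : V →ₗ[ℝ] V) * N ^ (2 * ℓ) = N ^ (2 * ℓ) ∧
    ∀ v : V, Tendsto (fun m : ℕ => ((m : ℝ) ^ (2 * ℓ))⁻¹ • (A ^ m) v) atTop
      (nhds ((((2 * ℓ).factorial : ℝ))⁻¹ • (N ^ (2 * ℓ)) v)) := by
  have hA : (A : V →ₗ[ℝ] V) = 1 + N := by
    rw [hN, Module.End.one_eq_id]
    abel
  refine ⟨by rw [hA, add_mul, one_mul, ← pow_succ', hnil, add_zero], fun v => ?_⟩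
  have hexpand (m : ℕ) : (A ^ m) v = ∑ j ∈ range (2 * ℓ + 1), (m.choose j : ℝ) • (N ^ j) v := by
    rw [LinearEquiv.coe_pow, ← LinearEquiv.coe_coe, hA, ← Module.End.coe_pow,
      one_add_pow_eq_sum_range_of_pow_eq_zero hnil, LinearMap.sum_apply]
    simp only [LinearMap.smul_apply, Nat.cast_smul_eq_nsmul]
  simpa only [hexpand] using tendsto_inv_pow_smul_sum_choose_smul (2 * ℓ) fun j => (N ^ j) v

/-- For a unipotent `A` with `N = A − Id`, `N^{2ℓ+1} = 0`, `N^{2ℓ} ≠ 0`: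
the image of `N^{2ℓ}` is pointwise `A`-invariant, and
`N^{2ℓ}/(2ℓ)! = lim_{m→∞} A^m/m^{2ℓ}`. -/
theorem stmt4 {V : Type*} [NormedAddCommGroup V] [NormedSpace ℝ V] [FiniteDimensional ℝ V]
    (A : V ≃ₗ[ℝ] V) (ℓ : ℕ) (N : V →ₗ[ℝ] V)
    (hN : N = (A : V →ₗ[ℝ] V) - LinearMap.id)
    (hnil : N ^ (2 * ℓ + 1) = 0) (hne : N ^ (2 * ℓ) ≠ 0) :
    (A : V →ₗ[ℝ] V) * N ^ (2 * ℓ) = N ^ (2 * ℓ) ∧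
    ∀ v : V, Tendsto (fun m : ℕ => ((m : ℝ) ^ (2 * ℓ))⁻¹ • (A ^ m) v) atTop
      (nhds ((((2 * ℓ).factorial : ℝ))⁻¹ • (N ^ (2 * ℓ)) v)) :=
  stmt4_general A ℓ N hN hnil
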